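/- Let n, k be positive integers, let P be a constant symmetric n×n real matrix, and for each i = 1,…,k let A_i : ℝ × ℝᵏ → Matrix(n,n,ℝ) be a differentiable matrix-valued field and let C : ℝ × ℝᵏ → Matrix(n,n,ℝ) satisfy C(t,x) + C(t,x)ᵀ = 0 for all (t,x). Suppose U : ℝ × ℝᵏ → ℝⁿ is differentiable and satisfies pointwise the skew-symmetric system P ∂ₜU + Σᵢ ( ∂_{xᵢ}(A_i U) + A_iᵀ ∂_{xᵢ}U ) + C U = 0. Then the pointwise energy conservation law ∂ₜ(Uᵀ P U) + Σᵢ ∂_{xᵢ}( 2 Uᵀ A_i U ) = 0 holds at every (t,x). -/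

import Mathlib

/-!
Dotting the system with `2U` gives the law: by the product rule, `∂ₜ(Uᵀ P U) = 2 Uᵀ P Uₜ`
because `P` is symmetric, and
`∂_{xᵢ}(Uᵀ Aᵢ U) = Uᵀ (Aᵢ U)_{xᵢ} + U_{xᵢ}ᵀ Aᵢ U = Uᵀ ((Aᵢ U)_{xᵢ} + Aᵢᵀ U_{xᵢ})`,
while `Uᵀ C U = 0` because `C` is skew-symmetric.
-/

open Matrix

theorem Matrix.dotProduct_mulVec_self_eq_zero_of_add_transpose_eq_zero {m R : Type*}
    [Fintype m] [CommRing R] [NoZeroDivisors R] [CharZero R] {C : Matrix m m R}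
    (hC : C + Cᵀ = 0) (v : m → R) :
    v ⬝ᵥ C *ᵥ v = 0 := by
  have hsum : v ⬝ᵥ C *ᵥ v + v ⬝ᵥ C *ᵥ v = 0 := by
    conv_lhs => arg 2; rw [← dotProduct_transpose_mulVec]
    rw [← dotProduct_add, ← add_mulVec, hC, zero_mulVec, dotProduct_zero]
  simpa using hsum

section Derivatives

variable {𝕜 ι : Type*} [NontriviallyNormedField 𝕜] [Fintype ι]

theorem HasDerivAt.dotProduct {f g : 𝕜 → ι → 𝕜} {f' g' : ι → 𝕜} {s : 𝕜}
    (hf : HasDerivAt f f' s) (hg : HasDerivAt g g' s) :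
    HasDerivAt (fun s => f s ⬝ᵥ g s) (f' ⬝ᵥ g s + f s ⬝ᵥ g') s := by
  unfold _root_.dotProduct
  rw [← Finset.sum_add_distrib]
  exact HasDerivAt.fun_sum fun j _ => (hasDerivAt_pi.1 hf j).mul (hasDerivAt_pi.1 hg j)

theorem HasDerivAt.const_mulVec {m : Type*} (M : Matrix m ι 𝕜) {f : 𝕜 → ι → 𝕜} {f' : ι → 𝕜}
    {s : 𝕜} (hf : HasDerivAt f f' s) : HasDerivAt (fun s => M *ᵥ f s) (M *ᵥ f') s :=
  hasDerivAt_pi.2 fun j =>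
    (hasDerivAt_const s (M j)).dotProduct hf |>.congr_deriv (by simp [mulVec])

theorem HasDerivAt.dotProduct_mulVec_self_of_isSymm {P : Matrix ι ι 𝕜} (hP : P.IsSymm)
    {u : 𝕜 → ι → 𝕜} {u' : ι → 𝕜} {s : 𝕜} (hu : HasDerivAt u u' s) :
    HasDerivAt (fun s => u s ⬝ᵥ P *ᵥ u s) (2 * (u s ⬝ᵥ P *ᵥ u')) s := by
  convert hu.dotProduct (hu.const_mulVec P) using 1
  rw [← dotProduct_transpose_mulVec, hP.eq]
  ring

theorem HasDerivAt.dotProduct_mulVec_self {M : 𝕜 → Matrix ι ι 𝕜} {u : 𝕜 → ι → 𝕜}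
    {u' w' : ι → 𝕜} {s : 𝕜} (hu : HasDerivAt u u' s)
    (hw : HasDerivAt (fun s => M s *ᵥ u s) w' s) :
    HasDerivAt (fun s => u s ⬝ᵥ M s *ᵥ u s) (u s ⬝ᵥ (w' + (M s)ᵀ *ᵥ u')) s := by
  convert hu.dotProduct hw using 1
  rw [dotProduct_add, dotProduct_transpose_mulVec, add_comm]

theorem Differentiable.mulVec {E m n : Type*} [NormedAddCommGroup E] [NormedSpace 𝕜 E]
    [Fintype n] {M : E → Matrix m n 𝕜} {v : E → n → 𝕜}
    (hM : ∀ a b, Differentiable 𝕜 fun q => M q a b) (hv : Differentiable 𝕜 v) :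
    Differentiable 𝕜 fun q => M q *ᵥ v q :=
  differentiable_pi.2 fun a =>
    Differentiable.fun_sum fun b _ => (hM a b).mul (differentiable_pi.1 hv b)

end Derivatives

section Slices

variable {G : Type*} [NormedAddCommGroup G] [NormedSpace ℝ G]

theorem Differentiable.slice_time {E : Type*} [NormedAddCommGroup E] [NormedSpace ℝ E]
    {F : ℝ → E → G} (hF : Differentiable ℝ fun q : ℝ × E => F q.1 q.2) (x : E) :
    Differentiable ℝ fun s => F s x :=
  hF.comp (differentiable_id.prodMk (differentiable_const x))

theorem Differentiable.slice_coord {ι : Type*} [Fintype ι] [DecidableEq ι]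
    {F : ℝ → (ι → ℝ) → G} (hF : Differentiable ℝ fun q : ℝ × (ι → ℝ) => F q.1 q.2)
    (t : ℝ) (x : ι → ℝ) (i : ι) : Differentiable ℝ fun s => F t (Function.update x i s) :=
  hF.comp <| (differentiable_const t).prodMk fun s =>
    (hasDerivAt_update x i s).differentiableAt

end Slices

theorem stmt_0 (n k : ℕ)
    (P : Matrix (Fin n) (Fin n) ℝ) (hP : P.IsSymm)
    (A : Fin k → ℝ → (Fin k → ℝ) → Matrix (Fin n) (Fin n) ℝ)
    (C : ℝ → (Fin k → ℝ) → Matrix (Fin n) (Fin n) ℝ)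
    (hC : ∀ t x, C t x + (C t x)ᵀ = 0)
    (U : ℝ → (Fin k → ℝ) → Fin n → ℝ)
    (hU : Differentiable ℝ (fun q : ℝ × (Fin k → ℝ) => U q.1 q.2))
    (hA : ∀ i a b, Differentiable ℝ (fun q : ℝ × (Fin k → ℝ) => A i q.1 q.2 a b))
    (hPDE : ∀ t x,
      P.mulVec (deriv (fun s => U s x) t)
      + (∑ i : Fin k,
          (deriv (fun s => (A i t (Function.update x i s)).mulVec
              (U t (Function.update x i s))) (x i)
           + (A i t x)ᵀ.mulVec (deriv (fun s => U t (Function.update x i s)) (x i))))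
      + (C t x).mulVec (U t x) = 0) :
    ∀ t x,
      deriv (fun s => U s x ⬝ᵥ P.mulVec (U s x)) t
      + (∑ i : Fin k,
          deriv (fun s => 2 * (U t (Function.update x i s) ⬝ᵥ
            (A i t (Function.update x i s)).mulVec (U t (Function.update x i s)))) (x i))
      = 0 := by
  intro t x
  have hAU : ∀ i, Differentiable ℝ fun q : ℝ × (Fin k → ℝ) => A i q.1 q.2 *ᵥ U q.1 q.2 :=
    fun i => Differentiable.mulVec (hA i) hU
  have energy : deriv (fun s => U s x ⬝ᵥ P *ᵥ U s x) t
      = 2 * (U t x ⬝ᵥ P *ᵥ deriv (fun s => U s x) t) :=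
    (((hU.slice_time x) t).hasDerivAt.dotProduct_mulVec_self_of_isSymm hP).deriv
  have flux : ∀ i, deriv (fun s => 2 * (U t (Function.update x i s) ⬝ᵥ
        A i t (Function.update x i s) *ᵥ U t (Function.update x i s))) (x i)
      = 2 * (U t x ⬝ᵥ (deriv (fun s => A i t (Function.update x i s) *ᵥ
          U t (Function.update x i s)) (x i)
        + (A i t x)ᵀ *ᵥ deriv (fun s => U t (Function.update x i s)) (x i))) := by
    intro i
    have hAUi := (hAU i).slice_coord (F := fun t y => A i t y *ᵥ U t y) t x i (x i)
    have hi := ((hU.slice_coord t x i (x i)).hasDerivAt.dotProduct_mulVec_self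
      hAUi.hasDerivAt).const_mul 2
    simpa only [Function.update_eq_self] using hi.deriv
  calc _ = 2 * (U t x ⬝ᵥ (P *ᵥ deriv (fun s => U s x) t
          + ∑ i, (deriv (fun s => A i t (Function.update x i s) *ᵥ
              U t (Function.update x i s)) (x i)
            + (A i t x)ᵀ *ᵥ deriv (fun s => U t (Function.update x i s)) (x i))
          + C t x *ᵥ U t x)) - 2 * (U t x ⬝ᵥ C t x *ᵥ U t x) := by
        rw [energy, Finset.sum_congr rfl fun i _ => flux i, ← Finset.mul_sum]
        simp only [dotProduct_add, dotProduct_sum]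
        ring
    _ = 0 := by
        rw [hPDE, dotProduct_mulVec_self_eq_zero_of_add_transpose_eq_zero (hC t x)]
        simp
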